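/- arXiv:1612.00150 — 2 statements merged into one kernel-verified Lean document; each statement's English description precedes it below -/
import Mathlib

section
/- Assume: (a) M ∈ ℝ^{N×N} is symmetric positive definite with condition number κ and M-norm ‖Z‖_M² = tr(Zᵀ M Z) on ℝ^{N×p}; (b) the row indices {1,…,N} are partitioned into n nonempty disjoint blocks, T : ℝ^{N×p} → ℝ^{N×p} is nonexpansive with respect to ‖·‖_M, S = I − T, and S_i Ẑ denotes the block-i restriction of S Ẑ (zero outside block i); (c) Z* satisfies TZ* = Z*; (d) q_1,…,q_n > 0 satisfy Σ_i q_i = 1, and q_min = min_i q_i; (e) τ ≥ 1 is an integer, Z^{k−τ},…,Z^k ∈ ℝ^{N×p}, J ⊆ {k−τ,…,k−1}, and Ẑ = Z^k + Σ_{d∈J}(Z^d − Z^{d+1}); (f) η > 0 and Z̄ = Z^k − η·SẐ. Set c = √(q_min/κ) and define the Lyapunov value Φ = ‖Z^k − Z*‖_M² + c·Σ_{d=k−τ}^{k−1} (d−(k−τ)+1)·‖Z^d − Z^{d+1}‖_M². For each i let Z^{k+1,i} = Z^k − (η/(n q_i)) S_i Ẑ. Then Σ_{i=1}^n q_i ·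 [ ‖Z^{k+1,i} − Z*‖_M² + c·Σ_{d=k+1−τ}^{k−1} (d−(k+1−τ)+1)·‖Z^d − Z^{d+1}‖_M² + c·τ·‖Z^k − Z^{k+1,i}‖_M² ] ≤ Φ − (1/n)·( 1/η − 2τ√κ/(n√q_min) − κ/(n q_min) )·‖Z̄ − Z^k‖_M². -/
open Matrix

/-- The squared `M`-norm `‖Z‖_M² = tr(Zᵀ M Z)` on `ℝ^{N×p}`. -/
noncomputable def Mnorm2 {N p : ℕ} (M : Matrix (Fin N) (Fin N) ℝ)
    (Z : Matrix (Fin N) (Fin p) ℝ) : ℝ :=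
  (Zᵀ * M * Z).trace

/-- `blockRestrict b i A` agrees with `A` on the rows in block `i` (rows `j` with
`b j = i`) and is zero elsewhere. -/
def blockRestrict {N p n : ℕ} (b : Fin N → Fin n) (i : Fin n)
    (A : Matrix (Fin N) (Fin p) ℝ) : Matrix (Fin N) (Fin p) ℝ :=
  Matrix.of fun j l => if b j = i then A j l else 0

/-!
Expanding the square, the expected update moves `Z^k - Z*` by `-(η/n) SẐ` at first order,
while the second moment is `(η/n)² Σᵢ qᵢ⁻¹ ‖SᵢẐ‖²_M ≤ (η/n)² (κ/qmin) ‖SẐ‖²_M` by the eigenvalue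
bounds of `M`. For the first-order term write `Z^k = Ẑ - Σ_{d∈J} (Z^d - Z^{d+1})`:
nonexpansiveness of `T` at the fixed point `Z*` gives `‖SẐ‖²_M ≤ 2⟨Ẑ - Z*, SẐ⟩_M`, and Young's
inequality with weight `ηγ/n`, `γ = √(κ/qmin)`, bounds each delay term. The `1/γ`-part of that
bound is exactly what the weighted tail loses when its weights shift down by one. Apart from
the second-moment bound, all of this holds for any symmetric positive semidefinite bilinear
form in place of `⟨X, Y⟩_M = tr(Xᵀ M Y)`.
-/

def weightedTailSum (f : ℕ → ℝ) (a k : ℕ) : ℝ :=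
  ∑ d ∈ Finset.Ico a k, ((d - a + 1 : ℕ) : ℝ) * f d

theorem weightedTailSum_succ (f : ℕ → ℝ) (a k : ℕ) :
    weightedTailSum f (a + 1) k = weightedTailSum f a k - ∑ d ∈ Finset.Ico a k, f d := by
  rcases lt_or_ge a k with hak | hka
  · rw [weightedTailSum, weightedTailSum, Finset.sum_eq_sum_Ico_succ_bot hak,
      Finset.sum_eq_sum_Ico_succ_bot hak]
    have hshift : ∀ d ∈ Finset.Ico (a + 1) k,
        ((d - (a + 1) + 1 : ℕ) : ℝ) * f d = ((d - a + 1 : ℕ) : ℝ) * f d - f d := by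
      intro d hd
      rw [Finset.mem_Ico] at hd
      rw [show d - a + 1 = (d - (a + 1) + 1) + 1 by omega]
      push_cast
      ring
    rw [Finset.sum_congr rfl hshift, Finset.sum_sub_distrib]
    simp
  · simp [weightedTailSum, Finset.Ico_eq_empty_of_le hka,
      Finset.Ico_eq_empty_of_le (hka.trans a.le_succ)]

namespace LinearMap.BilinForm

variable {E : Type*} [AddCommGroup E] [Module ℝ E] {B : LinearMap.BilinForm ℝ E}

theorem two_mul_apply_le_inv_mul_add_mul (hB : B.IsSymm) (hpos : ∀ x, 0 ≤ B x x)
    (x y : E) {ε : ℝ} (hε : 0 < ε) : 2 * B x y ≤ ε⁻¹ * B x x + ε * B y y := by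
  have h := hpos (x - ε • y)
  simp only [map_sub, map_smul, LinearMap.sub_apply, LinearMap.smul_apply, smul_eq_mul,
    hB.eq y x] at h
  rw [← mul_le_mul_iff_of_pos_left hε]
  field_simp
  nlinarith

theorem two_mul_apply_sum_le (hB : B.IsSymm) (hpos : ∀ x, 0 ≤ B x x) {ι : Type*}
    (s : Finset ι) (w : ι → E) (y : E) {ε : ℝ} (hε : 0 < ε) :
    2 * B (∑ d ∈ s, w d) y ≤ ε⁻¹ * ∑ d ∈ s, B (w d) (w d) + ε * s.card * B y y := by
  calc 2 * B (∑ d ∈ s, w d) y = ∑ d ∈ s, 2 * B (w d) y := by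
        rw [map_sum, LinearMap.sum_apply, Finset.mul_sum]
    _ ≤ ∑ d ∈ s, (ε⁻¹ * B (w d) (w d) + ε * B y y) :=
        Finset.sum_le_sum fun d _ => two_mul_apply_le_inv_mul_add_mul hB hpos _ _ hε
    _ = _ := by rw [Finset.sum_add_distrib, ← Finset.mul_sum, Finset.sum_const, nsmul_eq_mul]; ring

theorem apply_le_two_mul_of_apply_sub_le (hB : B.IsSymm) {u v : E}
    (h : B (u - v) (u - v) ≤ B u u) : B v v ≤ 2 * B u v := by
  simp only [map_sub, LinearMap.sub_apply, hB.eq v u] at h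
  linarith

theorem sum_mul_apply_sub_div_smul (hB : B.IsSymm) {n : ℕ} {q : Fin n → ℝ}
    (hq : ∀ i, q i ≠ 0) (hqsum : ∑ i, q i = 1) (x : E) (S : Fin n → E) (t : ℝ) :
    ∑ i, q i * B (x - (t / q i) • S i) (x - (t / q i) • S i)
      = B x x - 2 * t * B x (∑ i, S i) + t ^ 2 * ∑ i, (q i)⁻¹ * B (S i) (S i) := by
  have hterm : ∀ i, q i * B (x - (t / q i) • S i) (x - (t / q i) • S i)
      = q i * B x x - 2 * t * B x (S i) + t ^ 2 * ((q i)⁻¹ * B (S i) (S i)) := by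
    intro i
    simp only [map_sub, map_smul, LinearMap.sub_apply, LinearMap.smul_apply, smul_eq_mul,
      hB.eq (S i) x]
    field_simp [hq i]
    ring
  simp only [hterm, Finset.sum_add_distrib, Finset.sum_sub_distrib, ← Finset.sum_mul,
    ← Finset.mul_sum, hqsum, map_sum, one_mul]

theorem sum_mul_apply_div_smul {n : ℕ} {q : Fin n → ℝ}
    (hq : ∀ i, q i ≠ 0) (S : Fin n → E) (t : ℝ) :
    ∑ i, q i * B ((t / q i) • S i) ((t / q i) • S i)
      = t ^ 2 * ∑ i, (q i)⁻¹ * B (S i) (S i) := by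
  rw [Finset.mul_sum]
  refine Finset.sum_congr rfl fun i _ => ?_
  simp only [map_smul, LinearMap.smul_apply, smul_eq_mul]
  field_simp [hq i]

theorem residual_sub_le_two_mul_apply_of_nonexpansive (hB : B.IsSymm) (hpos : ∀ x, 0 ≤ B x x)
    {T : E → E} (hT : ∀ x y, B (T x - T y) (T x - T y) ≤ B (x - y) (x - y))
    {zstar : E} (hfix : T zstar = zstar) (x : E) {ι : Type*} (J : Finset ι) (w : ι → E)
    {zhat : E} (hzhat : zhat = x + ∑ d ∈ J, w d) {ε : ℝ} (hε : 0 < ε) :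
    B (zhat - T zhat) (zhat - T zhat) - ε⁻¹ * ∑ d ∈ J, B (w d) (w d)
        - ε * J.card * B (zhat - T zhat) (zhat - T zhat)
      ≤ 2 * B (x - zstar) (zhat - T zhat) := by
  have hfirm : B (zhat - T zhat) (zhat - T zhat) ≤ 2 * B (zhat - zstar) (zhat - T zhat) := by
    refine apply_le_two_mul_of_apply_sub_le hB ?_
    simpa only [hfix, sub_sub_sub_cancel_left] using hT zhat zstar
  have hcross := two_mul_apply_sum_le hB hpos J w (zhat - T zhat) hε
  have hsplit : x - zstar = (zhat - zstar) - ∑ d ∈ J, w d := by rw [hzhat]; abel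
  rw [hsplit, B.sub_left (zhat - zstar)]
  linarith

theorem sum_mul_lyapunov_block_update_eq (hB : B.IsSymm) {n : ℕ} {q : Fin n → ℝ}
    (hq : ∀ i, q i ≠ 0) (hqsum : ∑ i, q i = 1) {τ k : ℕ} (hτk : τ ≤ k) (Z : ℕ → E)
    (zstar : E) {S : Fin n → E} {v : E} (hS : ∑ i, S i = v) (c t : ℝ) :
    ∑ i, q i * (B (Z k - (t / q i) • S i - zstar) (Z k - (t / q i) • S i - zstar)
        + c * weightedTailSum (fun d => B (Z d - Z (d + 1)) (Z d - Z (d + 1))) (k + 1 - τ) k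
        + c * τ * B ((t / q i) • S i) ((t / q i) • S i))
      = B (Z k - zstar) (Z k - zstar)
        + c * weightedTailSum (fun d => B (Z d - Z (d + 1)) (Z d - Z (d + 1))) (k - τ) k
        - c * ∑ d ∈ Finset.Ico (k - τ) k, B (Z d - Z (d + 1)) (Z d - Z (d + 1))
        - 2 * t * B (Z k - zstar) v + (1 + c * τ) * t ^ 2 * ∑ i, (q i)⁻¹ * B (S i) (S i) := by
  have hshift : k + 1 - τ = k - τ + 1 := by omega
  simp only [sub_right_comm (Z k), mul_add, Finset.sum_add_distrib,
    sum_mul_apply_sub_div_smul hB hq hqsum, hS, ← Finset.sum_mul, hqsum,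
    mul_left_comm (q _) (c * τ), ← Finset.mul_sum, sum_mul_apply_div_smul hq,
    hshift, weightedTailSum_succ]
  ring

theorem le_two_mul_apply_residual_of_delayed (hB : B.IsSymm) (hpos : ∀ x, 0 ≤ B x x)
    {T : E → E} (hT : ∀ x y, B (T x - T y) (T x - T y) ≤ B (x - y) (x - y))
    {zstar : E} (hfix : T zstar = zstar) {τ k : ℕ} (Z : ℕ → E) {J : Finset ℕ}
    (hJ : J ⊆ Finset.Ico (k - τ) k) {zhat : E} (hzhat : zhat = Z k + ∑ d ∈ J, (Z d - Z (d + 1)))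
    {γ t : ℝ} (hγ : 0 < γ) (ht : 0 < t) :
    t * B (zhat - T zhat) (zhat - T zhat)
        - γ⁻¹ * ∑ d ∈ Finset.Ico (k - τ) k, B (Z d - Z (d + 1)) (Z d - Z (d + 1))
        - γ * τ * t ^ 2 * B (zhat - T zhat) (zhat - T zhat)
      ≤ 2 * t * B (Z k - zstar) (zhat - T zhat) := by
  set s := B (zhat - T zhat) (zhat - T zhat)
  have hdesc := residual_sub_le_two_mul_apply_of_nonexpansive hB hpos hT hfix (Z k) J
    (fun d => Z d - Z (d + 1)) hzhat (mul_pos ht hγ)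
  have hJsum := mul_le_mul_of_nonneg_left
    (Finset.sum_le_sum_of_subset_of_nonneg hJ fun d _ _ => hpos (Z d - Z (d + 1)))
    (inv_pos.2 hγ).le
  have hcard : (J.card : ℝ) ≤ τ := by
    have := Finset.card_le_card hJ
    rw [Nat.card_Ico] at this
    exact_mod_cast this.trans (by omega)
  have hcard' := mul_le_mul_of_nonneg_right hcard
    (mul_nonneg (by positivity) (hpos _) : 0 ≤ γ * t ^ 2 * s)
  have hexpand : t * (s - (t * γ)⁻¹ * ∑ d ∈ J, B (Z d - Z (d + 1)) (Z d - Z (d + 1))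
        - t * γ * J.card * s)
      = t * s - γ⁻¹ * ∑ d ∈ J, B (Z d - Z (d + 1)) (Z d - Z (d + 1))
        - γ * J.card * t ^ 2 * s := by
    field_simp
  linarith [mul_le_mul_of_nonneg_left hdesc ht.le]

theorem expected_lyapunov_block_update_le (hB : B.IsSymm) (hpos : ∀ x, 0 ≤ B x x)
    {T : E → E} (hT : ∀ x y, B (T x - T y) (T x - T y) ≤ B (x - y) (x - y))
    {zstar : E} (hfix : T zstar = zstar)
    {n : ℕ} {q : Fin n → ℝ} (hq : ∀ i, 0 < q i) (hqsum : ∑ i, q i = 1)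
    {τ k : ℕ} (hτk : τ ≤ k) (Z : ℕ → E) {J : Finset ℕ} (hJ : J ⊆ Finset.Ico (k - τ) k)
    {zhat : E} (hzhat : zhat = Z k + ∑ d ∈ J, (Z d - Z (d + 1)))
    {S : Fin n → E} (hS : ∑ i, S i = zhat - T zhat) {γ : ℝ} (hγ : 0 < γ)
    (hSq : ∑ i, (q i)⁻¹ * B (S i) (S i) ≤ γ ^ 2 * B (zhat - T zhat) (zhat - T zhat))
    {η : ℝ} (hη : 0 < η) :
    ∑ i, q i * (B (Z k - (η / (n * q i)) • S i - zstar) (Z k - (η / (n * q i)) • S i - zstar)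
        + γ⁻¹ * weightedTailSum (fun d => B (Z d - Z (d + 1)) (Z d - Z (d + 1))) (k + 1 - τ) k
        + γ⁻¹ * τ * B ((η / (n * q i)) • S i) ((η / (n * q i)) • S i))
      ≤ B (Z k - zstar) (Z k - zstar)
        + γ⁻¹ * weightedTailSum (fun d => B (Z d - Z (d + 1)) (Z d - Z (d + 1))) (k - τ) k
        - (1 / n) * (1 / η - 2 * τ * γ / n - γ ^ 2 / n)
          * (η ^ 2 * B (zhat - T zhat) (zhat - T zhat)) := by
  set s := B (zhat - T zhat) (zhat - T zhat)
  have hn : (0 : ℝ) < n := by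
    rcases Nat.eq_zero_or_pos n with rfl | hn
    · simp at hqsum
    · exact_mod_cast hn
  simp only [div_mul_eq_div_div η (n : ℝ)]
  rw [sum_mul_lyapunov_block_update_eq hB (fun i => (hq i).ne') hqsum hτk Z zstar hS]
  have hdesc := le_two_mul_apply_residual_of_delayed hB hpos hT hfix Z hJ hzhat hγ (div_pos hη hn)
  have hA := mul_le_mul_of_nonneg_left hSq
    (by positivity : (0 : ℝ) ≤ (1 + γ⁻¹ * τ) * (η / n) ^ 2)
  have hAcoef : (1 + γ⁻¹ * τ) * (η / n) ^ 2 * (γ ^ 2 * s)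
      = (γ ^ 2 + γ * τ) * (η / n) ^ 2 * s := by
    field_simp
  have hrate : (1 / n) * (1 / η - 2 * τ * γ / n - γ ^ 2 / n) * (η ^ 2 * s)
      = η / n * s - 2 * τ * γ * (η / n) ^ 2 * s - γ ^ 2 * (η / n) ^ 2 * s := by
    field_simp
  rw [hrate]
  linarith

end LinearMap.BilinForm

section MatrixNorm

variable {N p : ℕ} {M : Matrix (Fin N) (Fin N) ℝ}

noncomputable def Mform (M : Matrix (Fin N) (Fin N) ℝ) :
    LinearMap.BilinForm ℝ (Matrix (Fin N) (Fin p) ℝ) :=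
  LinearMap.mk₂ ℝ (fun X Y => (Xᵀ * M * Y).trace)
    (fun X X' Y => by rw [transpose_add, Matrix.add_mul, Matrix.add_mul, trace_add])
    (fun a X Y => by rw [transpose_smul, smul_mul, smul_mul, trace_smul, smul_eq_mul])
    (fun X Y Y' => by rw [Matrix.mul_add, trace_add])
    (fun a X Y => by rw [Matrix.mul_smul, trace_smul, smul_eq_mul])

theorem Mform_apply_self (Z : Matrix (Fin N) (Fin p) ℝ) : Mform M Z Z = Mnorm2 M Z := rfl

theorem Mform_isSymm (hM : M.IsHermitian) :
    (Mform M : LinearMap.BilinForm ℝ (Matrix (Fin N) (Fin p) ℝ)).IsSymm := by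
  refine ⟨fun X Y => ?_⟩
  have hMt : Mᵀ = M := by simpa [IsHermitian, conjTranspose_eq_transpose_of_trivial] using hM
  change (Xᵀ * M * Y).trace = (Yᵀ * M * X).trace
  rw [← trace_transpose, transpose_mul, transpose_mul, transpose_transpose, hMt,
    Matrix.mul_assoc]

theorem Mnorm2_nonneg (hM : M.PosSemidef) (Z : Matrix (Fin N) (Fin p) ℝ) : 0 ≤ Mnorm2 M Z := by
  simpa [Mnorm2, conjTranspose_eq_transpose_of_trivial] using
    (hM.conjTranspose_mul_mul_same Z).trace_nonneg

theorem Mnorm2_smul (a : ℝ) (Z : Matrix (Fin N) (Fin p) ℝ) :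
    Mnorm2 M (a • Z) = a ^ 2 * Mnorm2 M Z := by
  simp only [Mnorm2, transpose_smul, Matrix.smul_mul, Matrix.mul_smul, trace_smul, smul_eq_mul]
  ring

theorem Mnorm2_sub_left (A C : Matrix (Fin N) (Fin N) ℝ) (Z : Matrix (Fin N) (Fin p) ℝ) :
    Mnorm2 (A - C) Z = Mnorm2 A Z - Mnorm2 C Z := by
  simp only [Mnorm2, Matrix.mul_sub, Matrix.sub_mul, trace_sub]

theorem Mnorm2_smul_left (r : ℝ) (A : Matrix (Fin N) (Fin N) ℝ) (Z : Matrix (Fin N) (Fin p) ℝ) :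
    Mnorm2 (r • A) Z = r * Mnorm2 A Z := by
  simp only [Mnorm2, Matrix.mul_smul, Matrix.smul_mul, trace_smul, smul_eq_mul]

open scoped MatrixOrder in
theorem Mnorm2_le_mul_Mnorm2_one (hM : M.IsHermitian) {r : ℝ} (hr : ∀ i, hM.eigenvalues i ≤ r)
    (Z : Matrix (Fin N) (Fin p) ℝ) : Mnorm2 M Z ≤ r * Mnorm2 1 Z := by
  have hle : M ≤ algebraMap ℝ _ r := le_algebraMap_of_spectrum_le (by
    rw [hM.spectrum_real_eq_range_eigenvalues]; rintro _ ⟨i, rfl⟩; exact hr i) hM.isSelfAdjoint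
  have h := Mnorm2_nonneg (Matrix.le_iff.1 hle) Z
  rw [Algebra.algebraMap_eq_smul_one, Mnorm2_sub_left, Mnorm2_smul_left] at h
  linarith

open scoped MatrixOrder in
theorem mul_Mnorm2_one_le_Mnorm2 (hM : M.IsHermitian) {r : ℝ} (hr : ∀ i, r ≤ hM.eigenvalues i)
    (Z : Matrix (Fin N) (Fin p) ℝ) : r * Mnorm2 1 Z ≤ Mnorm2 M Z := by
  have hle : algebraMap ℝ _ r ≤ M := algebraMap_le_of_le_spectrum (by
    rw [hM.spectrum_real_eq_range_eigenvalues]; rintro _ ⟨i, rfl⟩; exact hr i) hM.isSelfAdjoint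
  have h := Mnorm2_nonneg (Matrix.le_iff.1 hle) Z
  rw [Algebra.algebraMap_eq_smul_one, Mnorm2_sub_left, Mnorm2_smul_left] at h
  linarith

theorem Mnorm2_one_eq_sum (Z : Matrix (Fin N) (Fin p) ℝ) :
    Mnorm2 1 Z = ∑ j, ∑ l, Z j l ^ 2 := by
  simp only [Mnorm2, Matrix.mul_one, trace, diag, mul_apply, transpose_apply, sq]
  exact Finset.sum_comm

variable {n : ℕ}

theorem sum_blockRestrict (b : Fin N → Fin n) (A : Matrix (Fin N) (Fin p) ℝ) :
    ∑ i, blockRestrict b i A = A := by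
  ext j l
  simp [Matrix.sum_apply, blockRestrict]

theorem sum_Mnorm2_one_blockRestrict (b : Fin N → Fin n) (A : Matrix (Fin N) (Fin p) ℝ) :
    ∑ i, Mnorm2 1 (blockRestrict b i A) = Mnorm2 1 A := by
  simp only [Mnorm2_one_eq_sum]
  rw [Finset.sum_comm]
  refine Finset.sum_congr rfl fun j _ => ?_
  rw [Finset.sum_comm]
  simp [blockRestrict, apply_ite (· ^ 2 : ℝ → ℝ)]

theorem sum_inv_mul_Mnorm2_blockRestrict_le (hM : M.IsHermitian) {lmax lmin : ℝ}
    (hlmax : ∀ i, hM.eigenvalues i ≤ lmax) (hlmin : ∀ i, lmin ≤ hM.eigenvalues i)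
    (hlmin0 : 0 < lmin) (hle : lmin ≤ lmax) (b : Fin N → Fin n) {q : Fin n → ℝ} {qmin : ℝ}
    (hqmin0 : 0 < qmin) (hqmin : ∀ i, qmin ≤ q i) (A : Matrix (Fin N) (Fin p) ℝ) :
    ∑ i, (q i)⁻¹ * Mnorm2 M (blockRestrict b i A) ≤ lmax / lmin / qmin * Mnorm2 M A := by
  have hF : Mnorm2 1 A ≤ lmin⁻¹ * Mnorm2 M A := by
    rw [inv_mul_eq_div, le_div_iff₀ hlmin0, mul_comm]
    exact mul_Mnorm2_one_le_Mnorm2 hM hlmin A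
  calc ∑ i, (q i)⁻¹ * Mnorm2 M (blockRestrict b i A)
      ≤ ∑ i, qmin⁻¹ * (lmax * Mnorm2 1 (blockRestrict b i A)) := by
        refine Finset.sum_le_sum fun i _ => mul_le_mul (inv_anti₀ hqmin0 (hqmin i))
          (Mnorm2_le_mul_Mnorm2_one hM hlmax _) ?_ (inv_nonneg.2 hqmin0.le)
        exact (mul_nonneg hlmin0.le (Mnorm2_nonneg PosSemidef.one _)).trans
          (mul_Mnorm2_one_le_Mnorm2 hM hlmin _)
    _ = qmin⁻¹ * lmax * Mnorm2 1 A := by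
        rw [← Finset.mul_sum, ← Finset.mul_sum, sum_Mnorm2_one_blockRestrict, mul_assoc]
    _ ≤ qmin⁻¹ * lmax * (lmin⁻¹ * Mnorm2 M A) :=
        mul_le_mul_of_nonneg_left hF (mul_nonneg (inv_nonneg.2 hqmin0.le) (hlmin0.le.trans hle))
    _ = lmax / lmin / qmin * Mnorm2 M A := by ring

end MatrixNorm

theorem fundamental_inequality_U_metric_general (N p n : ℕ)
    (M : Matrix (Fin N) (Fin N) ℝ) (hM : M.PosDef)
    (lmax lmin : ℝ)
    (hlmax : IsGreatest (Set.range hM.isHermitian.eigenvalues) lmax)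
    (hlmin : IsLeast (Set.range hM.isHermitian.eigenvalues) lmin)
    (b : Fin N → Fin n)
    (T : Matrix (Fin N) (Fin p) ℝ → Matrix (Fin N) (Fin p) ℝ)
    (hT : ∀ X Y : Matrix (Fin N) (Fin p) ℝ,
      Mnorm2 M (T X - T Y) ≤ Mnorm2 M (X - Y))
    (Zstar : Matrix (Fin N) (Fin p) ℝ) (hfix : T Zstar = Zstar)
    (q : Fin n → ℝ) (hq : ∀ i, 0 < q i) (hqsum : ∑ i, q i = 1)
    (qmin : ℝ) (hqmin : IsLeast (Set.range q) qmin)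
    (τ k : ℕ) (hτk : τ ≤ k)
    (Z : ℕ → Matrix (Fin N) (Fin p) ℝ)
    (J : Finset ℕ) (hJ : J ⊆ Finset.Ico (k - τ) k)
    (Zhat : Matrix (Fin N) (Fin p) ℝ)
    (hZhat : Zhat = Z k + ∑ d ∈ J, (Z d - Z (d + 1)))
    (η : ℝ) (hη : 0 < η)
    (Zbar : Matrix (Fin N) (Fin p) ℝ)
    (hZbar : Zbar = Z k - η • (Zhat - T Zhat))
    (c : ℝ) (hc : c = Real.sqrt (qmin / (lmax / lmin)))
    (Znext : Fin n → Matrix (Fin N) (Fin p) ℝ)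
    (hZnext : ∀ i, Znext i = Z k - (η / ((n : ℝ) * q i)) • blockRestrict b i (Zhat - T Zhat))
    (Φ : ℝ)
    (hΦ : Φ = Mnorm2 M (Z k - Zstar)
      + c * ∑ d ∈ Finset.Ico (k - τ) k,
          ((d - (k - τ) + 1 : ℕ) : ℝ) * Mnorm2 M (Z d - Z (d + 1))) :
    ∑ i, q i *
        (Mnorm2 M (Znext i - Zstar)
          + c * ∑ d ∈ Finset.Ico (k + 1 - τ) k,
              ((d - (k + 1 - τ) + 1 : ℕ) : ℝ) * Mnorm2 M (Z d - Z (d + 1))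
          + c * (τ : ℝ) * Mnorm2 M (Z k - Znext i))
      ≤ Φ - (1 / (n : ℝ)) *
          (1 / η - 2 * (τ : ℝ) * Real.sqrt (lmax / lmin) / ((n : ℝ) * Real.sqrt qmin)
            - (lmax / lmin) / ((n : ℝ) * qmin))
          * Mnorm2 M (Zbar - Z k) := by
  obtain ⟨i₀, hi₀⟩ := hqmin.1
  have hqmin0 : 0 < qmin := hi₀ ▸ hq i₀
  obtain ⟨j₀, hj₀⟩ := hlmin.1
  have hlmin0 : 0 < lmin := hj₀ ▸ hM.eigenvalues_pos j₀
  have hle : lmin ≤ lmax := hlmin.2 hlmax.1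
  have hκ0 : 0 < lmax / lmin / qmin := div_pos (div_pos (hlmin0.trans_le hle) hlmin0) hqmin0
  set γ := Real.sqrt (lmax / lmin / qmin) with hγdef
  have hγ : 0 < γ := Real.sqrt_pos.2 hκ0
  have hγsq : γ ^ 2 = lmax / lmin / qmin := Real.sq_sqrt hκ0.le
  have hcγ : c = γ⁻¹ := by rw [hc, ← Real.sqrt_inv, inv_div]
  have hsqrt : 2 * (τ : ℝ) * Real.sqrt (lmax / lmin) / ((n : ℝ) * Real.sqrt qmin)
      = 2 * τ * γ / n := by
    rw [hγdef, Real.sqrt_div' _ hqmin0.le]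
    field_simp
  have hκ : lmax / lmin / ((n : ℝ) * qmin) = γ ^ 2 / n := by rw [hγsq]; ring
  have hZbar' : Mnorm2 M (Zbar - Z k) = η ^ 2 * Mnorm2 M (Zhat - T Zhat) := by
    rw [hZbar, sub_sub_cancel_left, ← neg_smul, Mnorm2_smul, neg_sq]
  have key := LinearMap.BilinForm.expected_lyapunov_block_update_le (Mform_isSymm hM.isHermitian)
    (Mnorm2_nonneg hM.posSemidef) hT hfix hq hqsum hτk Z hJ hZhat (sum_blockRestrict b _) hγ
    (hγsq ▸ sum_inv_mul_Mnorm2_blockRestrict_le hM.isHermitian (fun i => hlmax.2 ⟨i, rfl⟩)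
      (fun i => hlmin.2 ⟨i, rfl⟩) hlmin0 hle b hqmin0 (fun i => hqmin.2 ⟨i, rfl⟩) _) hη
  simp only [hZnext, sub_sub_cancel, hΦ, hcγ, hZbar', hsqrt, hκ]
  exact key

/-- **Fundamental inequality in the U-metric** (Theorem 3 of the paper).  With
`c = √(qmin/κ)` and the Lyapunov value
`Φ = ‖Z^k - Z*‖²_M + c Σ_{d=k-τ}^{k-1} (d-(k-τ)+1)‖Z^d - Z^{d+1}‖²_M`,
the expected squared U-distance after the update
`Z^{k+1,i} = Z^k - (η/(n qᵢ)) SᵢẐ` by a random agent `i` satisfies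
`Σᵢ qᵢ [ ‖Z^{k+1,i} - Z*‖²_M + c Σ_{d=k+1-τ}^{k-1} (d-(k+1-τ)+1)‖Z^d - Z^{d+1}‖²_M
        + c τ ‖Z^k - Z^{k+1,i}‖²_M ]
  ≤ Φ - (1/n)(1/η - 2τ√κ/(n√qmin) - κ/(n qmin)) ‖Z̄ - Z^k‖²_M`. -/
theorem fundamental_inequality_U_metric (N p n : ℕ)
    (M : Matrix (Fin N) (Fin N) ℝ) (hM : M.PosDef)
    (lmax lmin : ℝ)
    (hlmax : IsGreatest (Set.range hM.isHermitian.eigenvalues) lmax)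
    (hlmin : IsLeast (Set.range hM.isHermitian.eigenvalues) lmin)
    (b : Fin N → Fin n) (hb : Function.Surjective b)
    (T : Matrix (Fin N) (Fin p) ℝ → Matrix (Fin N) (Fin p) ℝ)
    (hT : ∀ X Y : Matrix (Fin N) (Fin p) ℝ,
      Mnorm2 M (T X - T Y) ≤ Mnorm2 M (X - Y))
    (Zstar : Matrix (Fin N) (Fin p) ℝ) (hfix : T Zstar = Zstar)
    (q : Fin n → ℝ) (hq : ∀ i, 0 < q i) (hqsum : ∑ i, q i = 1)
    (qmin : ℝ) (hqmin : IsLeast (Set.range q) qmin)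
    (τ k : ℕ) (hτ : 1 ≤ τ) (hτk : τ ≤ k)
    (Z : ℕ → Matrix (Fin N) (Fin p) ℝ)
    (J : Finset ℕ) (hJ : J ⊆ Finset.Ico (k - τ) k)
    (Zhat : Matrix (Fin N) (Fin p) ℝ)
    (hZhat : Zhat = Z k + ∑ d ∈ J, (Z d - Z (d + 1)))
    (η : ℝ) (hη : 0 < η)
    (Zbar : Matrix (Fin N) (Fin p) ℝ)
    (hZbar : Zbar = Z k - η • (Zhat - T Zhat))
    (c : ℝ) (hc : c = Real.sqrt (qmin / (lmax / lmin)))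
    (Znext : Fin n → Matrix (Fin N) (Fin p) ℝ)
    (hZnext : ∀ i, Znext i = Z k - (η / ((n : ℝ) * q i)) • blockRestrict b i (Zhat - T Zhat))
    (Φ : ℝ)
    (hΦ : Φ = Mnorm2 M (Z k - Zstar)
      + c * ∑ d ∈ Finset.Ico (k - τ) k,
          ((d - (k - τ) + 1 : ℕ) : ℝ) * Mnorm2 M (Z d - Z (d + 1))) :
    ∑ i, q i *
        (Mnorm2 M (Znext i - Zstar)
          + c * ∑ d ∈ Finset.Ico (k + 1 - τ) k,
              ((d - (k + 1 - τ) + 1 : ℕ) : ℝ) * Mnorm2 M (Z d - Z (d + 1))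
          + c * (τ : ℝ) * Mnorm2 M (Z k - Znext i))
      ≤ Φ - (1 / (n : ℝ)) *
          (1 / η - 2 * (τ : ℝ) * Real.sqrt (lmax / lmin) / ((n : ℝ) * Real.sqrt qmin)
            - (lmax / lmin) / ((n : ℝ) * qmin))
          * Mnorm2 M (Zbar - Z k) :=
  fundamental_inequality_U_metric_general N p n M hM lmax lmin hlmax hlmin b T hT Zstar hfix q hq
    hqsum qmin hqmin τ k hτk Z J hJ Zhat hZhat η hη Zbar hZbar c hc Znext hZnext Φ hΦ
end

section
/- Assume: (a) M ∈ ℝ^{N×N} is symmetric positive definite with M-norm ‖Z‖_M² = tr(Zᵀ M Z) and M-inner product ⟨Z, Z̃⟩_M = tr(Zᵀ M Z̃) on ℝ^{N×p}; (b) T : ℝ^{N×p} → ℝ^{N×p} is nonexpansive with respect to ‖·‖_M and S = I − T; (c) Z* satisfies TZ* = Z*; (d) Z^{k−τ},…,Z^k ∈ ℝ^{N×p} with τ ≥ 0, J ⊆ {k−τ,…,k−1}, and Ẑ = Z^k + Σ_{d∈J}(Z^d − Z^{d+1}); (e) η > 0 and Z̄ = Z^k − η·SẐ. Then for every ξ >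 0, ⟨SẐ, Z* − Z^k⟩_M ≤ −(1/(2η²))·‖Z^k − Z̄‖_M² + (|J|/(2ξη))·‖Z^k − Z̄‖_M² + (ξ/(2η))·Σ_{d∈J} ‖Z^d − Z^{d+1}‖_M². -/
/-!
Firm nonexpansiveness of `S = I - T` at the fixed point `Z*` (where `SZ* = 0`) gives
`⟨SẐ, Z* - Ẑ⟩_M ≤ -½‖SẐ‖²_M`. Writing `Z* - Z^k = (Z* - Ẑ) + Σ_{d∈J}(Z^d - Z^{d+1})`, each of the
remaining `|J|` cross terms is split by Young's inequality with weight `η/ξ`, and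
`‖Z^k - Z̄‖²_M = η²‖SẐ‖²_M` converts the result into the stated form.
-/

open Matrix

/-- The `M`-inner product `⟨Z, Z̃⟩_M = tr(Zᵀ M Z̃)` on `ℝ^{N×p}`. -/
noncomputable def Minner {N p : ℕ} (M : Matrix (Fin N) (Fin N) ℝ)
    (Z Z' : Matrix (Fin N) (Fin p) ℝ) : ℝ :=
  (Zᵀ * M * Z').trace

namespace Minner

variable {N p : ℕ} {M : Matrix (Fin N) (Fin N) ℝ}

lemma add_right (X Y Y' : Matrix (Fin N) (Fin p) ℝ) :
    Minner M X (Y + Y') = Minner M X Y + Minner M X Y' := by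
  simp [Minner, Matrix.mul_add]

lemma sub_left (X X' Y : Matrix (Fin N) (Fin p) ℝ) :
    Minner M (X - X') Y = Minner M X Y - Minner M X' Y := by
  simp [Minner, Matrix.sub_mul]

lemma sub_right (X Y Y' : Matrix (Fin N) (Fin p) ℝ) :
    Minner M X (Y - Y') = Minner M X Y - Minner M X Y' := by
  simp [Minner, Matrix.mul_sub]

lemma smul_left (r : ℝ) (X Y : Matrix (Fin N) (Fin p) ℝ) :
    Minner M (r • X) Y = r * Minner M X Y := by
  simp [Minner, Matrix.smul_mul]

lemma smul_right (r : ℝ) (X Y : Matrix (Fin N) (Fin p) ℝ) :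
    Minner M X (r • Y) = r * Minner M X Y := by
  simp [Minner, Matrix.mul_smul]

lemma sum_right {ι : Type*} (s : Finset ι) (X : Matrix (Fin N) (Fin p) ℝ)
    (Y : ι → Matrix (Fin N) (Fin p) ℝ) :
    Minner M X (∑ i ∈ s, Y i) = ∑ i ∈ s, Minner M X (Y i) := by
  simp [Minner, Matrix.mul_sum, Matrix.trace_sum]

lemma comm (hM : M.IsSymm) (X Y : Matrix (Fin N) (Fin p) ℝ) :
    Minner M X Y = Minner M Y X := by
  rw [Minner, ← Matrix.trace_transpose, Matrix.transpose_mul, Matrix.transpose_mul,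
    Matrix.transpose_transpose, hM.eq, ← Matrix.mul_assoc, Minner]

end Minner

namespace Mnorm2

variable {N p : ℕ} {M : Matrix (Fin N) (Fin N) ℝ}

lemma eq_Minner (X : Matrix (Fin N) (Fin p) ℝ) : Mnorm2 M X = Minner M X X := rfl

lemma nonneg (hM : M.PosSemidef) (X : Matrix (Fin N) (Fin p) ℝ) : 0 ≤ Mnorm2 M X := by
  simpa [Mnorm2, Matrix.conjTranspose_eq_transpose_of_trivial] using
    (hM.conjTranspose_mul_mul_same X).trace_nonneg

lemma smul (r : ℝ) (X : Matrix (Fin N) (Fin p) ℝ) : Mnorm2 M (r • X) = r ^ 2 * Mnorm2 M X := by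
  rw [eq_Minner, Minner.smul_left, Minner.smul_right, ← eq_Minner]
  ring

lemma sub (hM : M.IsSymm) (X Y : Matrix (Fin N) (Fin p) ℝ) :
    Mnorm2 M (X - Y) = Mnorm2 M X - 2 * Minner M X Y + Mnorm2 M Y := by
  rw [eq_Minner, Minner.sub_left, Minner.sub_right, Minner.sub_right, Minner.comm hM Y X,
    ← eq_Minner, ← eq_Minner]
  ring

end Mnorm2

section Estimates

variable {N p : ℕ} {M : Matrix (Fin N) (Fin N) ℝ}

lemma Minner_le_young (hM : M.PosSemidef) {t : ℝ} (ht : 0 < t) (X Y : Matrix (Fin N) (Fin p) ℝ) :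
    Minner M X Y ≤ t / 2 * Mnorm2 M X + 1 / (2 * t) * Mnorm2 M Y := by
  have hsq := Mnorm2.nonneg hM (t • X - Y)
  rw [Mnorm2.sub (isHermitian_iff_isSymm.mp hM.isHermitian), Mnorm2.smul,
    Minner.smul_left] at hsq
  have key : t / 2 * Mnorm2 M X + 1 / (2 * t) * Mnorm2 M Y - Minner M X Y
      = 1 / (2 * t) * (t ^ 2 * Mnorm2 M X - 2 * (t * Minner M X Y) + Mnorm2 M Y) := by
    field_simp
    ring
  linarith [mul_nonneg (one_div_nonneg.mpr (by positivity : (0 : ℝ) ≤ 2 * t)) hsq]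

lemma sum_Minner_le_young (hM : M.PosSemidef) {t : ℝ} (ht : 0 < t) {ι : Type*} (s : Finset ι)
    (X : Matrix (Fin N) (Fin p) ℝ) (Y : ι → Matrix (Fin N) (Fin p) ℝ) :
    ∑ i ∈ s, Minner M X (Y i)
      ≤ s.card * (t / 2 * Mnorm2 M X) + 1 / (2 * t) * ∑ i ∈ s, Mnorm2 M (Y i) := by
  calc ∑ i ∈ s, Minner M X (Y i)
      ≤ ∑ i ∈ s, (t / 2 * Mnorm2 M X + 1 / (2 * t) * Mnorm2 M (Y i)) :=
        Finset.sum_le_sum fun i _ => Minner_le_young hM ht X (Y i)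
    _ = s.card * (t / 2 * Mnorm2 M X) + 1 / (2 * t) * ∑ i ∈ s, Mnorm2 M (Y i) := by
        rw [Finset.sum_add_distrib, Finset.sum_const, nsmul_eq_mul, Finset.mul_sum]

variable {T : Matrix (Fin N) (Fin p) ℝ → Matrix (Fin N) (Fin p) ℝ}

lemma Mnorm2_residual_le_of_nonexpansive (hM : M.IsSymm)
    (hT : ∀ X Y, Mnorm2 M (T X - T Y) ≤ Mnorm2 M (X - Y)) (X Y : Matrix (Fin N) (Fin p) ℝ) :
    Mnorm2 M ((X - T X) - (Y - T Y)) ≤ 2 * Minner M (X - Y) ((X - T X) - (Y - T Y)) := by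
  have h := hT X Y
  rw [show T X - T Y = (X - Y) - ((X - T X) - (Y - T Y)) by abel, Mnorm2.sub hM] at h
  linarith

lemma Minner_residual_sub_fixedPoint_le (hM : M.IsSymm)
    (hT : ∀ X Y, Mnorm2 M (T X - T Y) ≤ Mnorm2 M (X - Y)) {Z' : Matrix (Fin N) (Fin p) ℝ}
    (hfix : T Z' = Z') (X : Matrix (Fin N) (Fin p) ℝ) :
    Minner M (X - T X) (Z' - X) ≤ -(1 / 2) * Mnorm2 M (X - T X) := by
  have h := Mnorm2_residual_le_of_nonexpansive hM hT X Z'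
  rw [hfix, sub_self, sub_zero, Minner.sub_left] at h
  rw [Minner.comm hM, Minner.sub_left]
  linarith

end Estimates

theorem cross_term_estimate_general (N p : ℕ)
    (M : Matrix (Fin N) (Fin N) ℝ) (hM : M.PosDef)
    (T : Matrix (Fin N) (Fin p) ℝ → Matrix (Fin N) (Fin p) ℝ)
    (hT : ∀ X Y : Matrix (Fin N) (Fin p) ℝ,
      Mnorm2 M (T X - T Y) ≤ Mnorm2 M (X - Y))
    (Zstar : Matrix (Fin N) (Fin p) ℝ) (hfix : T Zstar = Zstar)
    (k : ℕ)
    (Z : ℕ → Matrix (Fin N) (Fin p) ℝ)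
    (J : Finset ℕ)
    (Zhat : Matrix (Fin N) (Fin p) ℝ)
    (hZhat : Zhat = Z k + ∑ d ∈ J, (Z d - Z (d + 1)))
    (η : ℝ) (hη : 0 < η)
    (Zbar : Matrix (Fin N) (Fin p) ℝ)
    (hZbar : Zbar = Z k - η • (Zhat - T Zhat))
    (ξ : ℝ) (hξ : 0 < ξ) :
    Minner M (Zhat - T Zhat) (Zstar - Z k)
      ≤ -(1 / (2 * η ^ 2)) * Mnorm2 M (Z k - Zbar)
        + ((J.card : ℝ) / (2 * ξ * η)) * Mnorm2 M (Z k - Zbar)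
        + (ξ / (2 * η)) * ∑ d ∈ J, Mnorm2 M (Z d - Z (d + 1)) := by
  have hsplit : Zstar - Z k = (Zstar - Zhat) + ∑ d ∈ J, (Z d - Z (d + 1)) := by
    rw [hZhat]; abel
  have hstep : Z k - Zbar = η • (Zhat - T Zhat) := by
    rw [hZbar]; abel
  have hfixed := Minner_residual_sub_fixedPoint_le
    (isHermitian_iff_isSymm.mp hM.isHermitian) hT hfix Zhat
  have hyoung := sum_Minner_le_young hM.posSemidef (div_pos hη hξ) J (Zhat - T Zhat)
    fun d => Z d - Z (d + 1)
  rw [hsplit, Minner.add_right, Minner.sum_right, hstep, Mnorm2.smul]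
  calc _ ≤ -(1 / 2) * Mnorm2 M (Zhat - T Zhat) + (J.card * (η / ξ / 2 * Mnorm2 M (Zhat - T Zhat))
          + 1 / (2 * (η / ξ)) * ∑ d ∈ J, Mnorm2 M (Z d - Z (d + 1))) :=
        add_le_add hfixed hyoung
    _ = _ := by
        field_simp
        ring

/-- **Key cross-term estimate.** `T` is nonexpansive in the `M`-norm with
residual `S = I - T`, `Z*` is a fixed point of `T`,
`Ẑ = Z^k + Σ_{d∈J}(Z^d - Z^{d+1})` is the delayed iterate with
`J ⊆ {k-τ,…,k-1}`, and `Z̄ = Z^k - η SẐ`.  Then for every `ξ > 0`,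
`⟨SẐ, Z* - Z^k⟩_M ≤ -(1/(2η²))‖Z^k - Z̄‖²_M + (|J|/(2ξη))‖Z^k - Z̄‖²_M
  + (ξ/(2η)) Σ_{d∈J} ‖Z^d - Z^{d+1}‖²_M`. -/
theorem cross_term_estimate (N p : ℕ)
    (M : Matrix (Fin N) (Fin N) ℝ) (hM : M.PosDef)
    (T : Matrix (Fin N) (Fin p) ℝ → Matrix (Fin N) (Fin p) ℝ)
    (hT : ∀ X Y : Matrix (Fin N) (Fin p) ℝ,
      Mnorm2 M (T X - T Y) ≤ Mnorm2 M (X - Y))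
    (Zstar : Matrix (Fin N) (Fin p) ℝ) (hfix : T Zstar = Zstar)
    (τ k : ℕ) (hτk : τ ≤ k)
    (Z : ℕ → Matrix (Fin N) (Fin p) ℝ)
    (J : Finset ℕ) (hJ : J ⊆ Finset.Ico (k - τ) k)
    (Zhat : Matrix (Fin N) (Fin p) ℝ)
    (hZhat : Zhat = Z k + ∑ d ∈ J, (Z d - Z (d + 1)))
    (η : ℝ) (hη : 0 < η)
    (Zbar : Matrix (Fin N) (Fin p) ℝ)
    (hZbar : Zbar = Z k - η • (Zhat - T Zhat))
    (ξ : ℝ) (hξ : 0 < ξ) :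
    Minner M (Zhat - T Zhat) (Zstar - Z k)
      ≤ -(1 / (2 * η ^ 2)) * Mnorm2 M (Z k - Zbar)
        + ((J.card : ℝ) / (2 * ξ * η)) * Mnorm2 M (Z k - Zbar)
        + (ξ / (2 * η)) * ∑ d ∈ J, Mnorm2 M (Z d - Z (d + 1)) :=
  cross_term_estimate_general N p M hM T hT Zstar hfix k Z J Zhat hZhat η hη Zbar hZbar ξ hξ
end
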